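/- arXiv:1608.03177 — 5 statements merged into one kernel-verified Lean document; each statement's English description precedes it below -/
import Mathlib

section
/- Suppose the fixed set F = F_E ∪ F_N contains no matching of size 3 and there exist at least two distinct F-fixed realisations of the bipartite degree sequence S. Then every F-fixed realisation G of S admits a 4-swap: there exists an F-fixed realisation G' of S with |E(G) △ E(G')| = 4. -/
/-!
Colour the non-fixed edges of `G` red and the non-fixed non-edges blue. Since a second fixed
realisation `H` has the same degrees, one can walk from red edges of `G \ H` to blue non-edges of
`H \ G` and back indefinitely, so there is a closed walk `v₀ u₀ v₁ u₁ …` alternating between red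
edges `(vᵢ, uᵢ)` and blue non-edges `(vᵢ₊₁, uᵢ)`. Take a shortest one. A red chord `(vᵣ, uᵣ₊₁)`
would shorten it, and a blue one closes the 4-cycle `vᵣ uᵣ vᵣ₊₁ uᵣ₊₁`, which can be swapped.
Otherwise the chords at `r = 0, 1, 2` are fixed pairs, and minimality makes them a matching of
size 3 in `F`.
-/

/-- `E ⊆ V × U` is a realisation of the bipartite degree sequence `(a, b)`:
vertex `i` of the first part has degree `a i`, vertex `j` of the second part degree `b j`. -/
def IsRealisation {n n' : ℕ} (a : Fin n → ℕ) (b : Fin n' → ℕ)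
    (E : Finset (Fin n × Fin n')) : Prop :=
  (∀ i : Fin n, (E.filter fun p => p.1 = i).card = a i) ∧
  (∀ j : Fin n', (E.filter fun p => p.2 = j).card = b j)

/-- An `F`-fixed realisation: a realisation containing all fixed edges `FE`
and none of the fixed non-edges `FN`. -/
def IsFFixedRealisation {n n' : ℕ} (a : Fin n → ℕ) (b : Fin n' → ℕ)
    (FE FN E : Finset (Fin n × Fin n')) : Prop :=
  IsRealisation a b E ∧ FE ⊆ E ∧ FN ∩ E = ∅

/-- `F` contains a matching of size 3: three pairs with pairwise distinct first
coordinates and pairwise distinct second coordinates. -/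
def HasMatchingThree {n n' : ℕ} (F : Finset (Fin n × Fin n')) : Prop :=
  ∃ p₁ p₂ p₃ : Fin n × Fin n', p₁ ∈ F ∧ p₂ ∈ F ∧ p₃ ∈ F ∧
    p₁.1 ≠ p₂.1 ∧ p₁.1 ≠ p₃.1 ∧ p₂.1 ≠ p₃.1 ∧
    p₁.2 ≠ p₂.2 ∧ p₁.2 ≠ p₃.2 ∧ p₂.2 ≠ p₃.2

open Finset Function

lemma Finset.sdiff_nonempty_of_card_eq {γ : Type*} [DecidableEq γ] {s t : Finset γ} {a : γ}
    (hst : #s = #t) (ha : a ∈ s \ t) : (t \ s).Nonempty := by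
  obtain ⟨has, hat⟩ := mem_sdiff.mp ha
  obtain ⟨b, hbt, hbs⟩ := exists_mem_notMem_of_card_lt_card (s := s.erase a) (t := t)
    (by rw [card_erase_of_mem has]; have := card_pos.mpr ⟨a, has⟩; omega)
  exact ⟨b, mem_sdiff.mpr ⟨hbt, fun hb => hbs (mem_erase.mpr ⟨by rintro rfl; exact hat hbt, hb⟩)⟩⟩

lemma Finset.card_filter_sdiff_union {γ : Type*} [DecidableEq γ] {G D A : Finset γ}
    (hD : D ⊆ G) (hA : Disjoint A G) (P : γ → Prop) [DecidablePred P]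
    (hP : #(D.filter P) = #(A.filter P)) : #((G \ D ∪ A).filter P) = #(G.filter P) := by
  have hsdiff : (G \ D).filter P = G.filter P \ D.filter P := by
    ext; simp only [mem_filter, mem_sdiff]; tauto
  have hdisj : Disjoint ((G \ D).filter P) (A.filter P) :=
    disjoint_filter_filter (hA.symm.mono_left sdiff_subset)
  rw [filter_union, card_union_of_disjoint hdisj, hsdiff,
    card_sdiff_of_subset (filter_subset_filter P hD), ← hP]
  have := card_le_card (filter_subset_filter P hD)
  omega

lemma Finset.symmDiff_sdiff_union {γ : Type*} [DecidableEq γ] {G D A : Finset γ}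
    (hD : D ⊆ G) (hA : Disjoint A G) : symmDiff G (G \ D ∪ A) = D ∪ A := by
  ext x
  have := @hD x
  have : x ∈ A → x ∉ G := fun h => disjoint_left.mp hA h
  simp only [mem_symmDiff, mem_union, mem_sdiff]
  tauto

theorem Function.periodicPts_nonempty {α : Type*} [Finite α] [Nonempty α] (f : α → α) :
    (periodicPts f).Nonempty := by
  obtain ⟨x⟩ := ‹Nonempty α›
  obtain ⟨i, j, hij, heq⟩ := Finite.exists_ne_map_eq_of_infinite fun i => f^[i] x
  wlog hlt : i < j generalizing i j
  · exact this j i hij.symm heq.symm (by omega)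
  refine ⟨f^[i] x, mk_mem_periodicPts (n := j - i) (by omega) ?_⟩
  rw [IsPeriodicPt, IsFixedPt, ← iterate_add_apply, Nat.sub_add_cancel hlt.le, heq]

section AltCycle

variable {α β : Type*} {R B : Set (α × β)} {k : ℕ} {v : ℕ → α} {u : ℕ → β}

structure IsAltCycle (R B : Set (α × β)) (k : ℕ) (v : ℕ → α) (u : ℕ → β) : Prop where
  pos : 0 < k
  periodic_fst : Periodic v k
  periodic_snd : Periodic u k
  red : ∀ i, (v i, u i) ∈ R
  blue : ∀ i, (v (i + 1), u i) ∈ B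

def HasAltSquare (R B : Set (α × β)) : Prop :=
  ∃ x₀ x₁ y₀ y₁, x₀ ≠ x₁ ∧ y₀ ≠ y₁ ∧
    (x₀, y₀) ∈ R ∧ (x₁, y₁) ∈ R ∧ (x₀, y₁) ∈ B ∧ (x₁, y₀) ∈ B

namespace IsAltCycle

lemma shift (h : IsAltCycle R B k v u) (r : ℕ) :
    IsAltCycle R B k (fun i => v (i + r)) (fun i => u (i + r)) where
  pos := h.pos
  periodic_fst := h.periodic_fst.add_const r
  periodic_snd := h.periodic_snd.add_const r
  red i := h.red (i + r)
  blue i := by simpa only [Nat.add_right_comm] using h.blue (i + r)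

lemma one_lt (h : IsAltCycle R B k v u) (hRB : Disjoint R B) : 1 < k := by
  by_contra! hk
  have hk : k = 1 := by have := h.pos; omega
  have hv : v (0 + 1) = v 0 := by simpa [hk] using h.periodic_fst 0
  exact hRB.ne_of_mem (h.red 0) (h.blue 0) (by rw [hv])

lemma of_path {m : ℕ} (hm : 0 < m) (hred : ∀ t < m, (v t, u t) ∈ R)
    (hblue : ∀ t, t + 1 < m → (v (t + 1), u t) ∈ B) (hclose : (v 0, u (m - 1)) ∈ B) :
    IsAltCycle R B m (fun t => v (t % m)) (fun t => u (t % m)) where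
  pos := hm
  periodic_fst t := by simp
  periodic_snd t := by simp
  red t := hred _ (Nat.mod_lt _ hm)
  blue t := by
    rw [← Nat.mod_add_mod]
    rcases Nat.lt_or_ge (t % m + 1) m with ht | ht
    · rw [Nat.mod_eq_of_lt ht]
      exact hblue _ ht
    · have ht : t % m + 1 = m := by have := Nat.mod_lt t hm; omega
      rw [ht, Nat.mod_self, show t % m = m - 1 by omega]
      exact hclose

lemma fst_ne (h : IsAltCycle R B k v u)
    (hmin : ∀ m v' u', IsAltCycle R B m v' u' → k ≤ m) {i j : ℕ} (hij : i < j)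
    (hji : j < i + k) :
    v i ≠ v j := by
  intro hv
  have hpath := of_path (R := R) (B := B) (m := j - i) (v := fun t => v (i + t))
    (u := fun t => u (i + t)) (by omega) (fun t _ => h.red _)
    (fun t _ => by simpa only [Nat.add_assoc] using h.blue (i + t))
    (by
      have := h.blue (j - 1)
      rwa [Nat.sub_add_cancel (by omega), ← hv, show j - 1 = i + (j - i - 1) by omega] at this)
  have := hmin _ _ _ hpath
  omega

lemma snd_ne (h : IsAltCycle R B k v u)
    (hmin : ∀ m v' u', IsAltCycle R B m v' u' → k ≤ m) {i j : ℕ} (hij : i < j)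
    (hji : j < i + k) :
    u i ≠ u j := by
  intro hu
  have hpath := of_path (R := R) (B := B) (m := j - i) (v := fun t => v (i + 1 + t))
    (u := fun t => u (i + 1 + t)) (by omega) (fun t _ => h.red _)
    (fun t _ => by simpa only [Nat.add_assoc] using h.blue (i + 1 + t))
    (by simpa only [Nat.add_zero, show i + 1 + (j - i - 1) = j by omega, ← hu] using h.blue i)
  have := hmin _ _ _ hpath
  omega

lemma chord_notMem_red (h : IsAltCycle R B k v u)
    (hmin : ∀ m v' u', IsAltCycle R B m v' u' → k ≤ m) (hk : 1 < k) : (v 0, u 1) ∉ R := by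
  intro hchord
  have hpath := of_path (R := R) (B := B) (m := k - 1)
    (v := fun t => if t = 0 then v 0 else v (t + 1)) (u := fun t => u (t + 1)) (by omega)
    (fun t _ => by split_ifs with ht; exacts [by rwa [ht], h.red _])
    (fun t _ => by
      simpa only [Nat.add_eq_zero_iff, one_ne_zero, and_false, if_false] using h.blue (t + 1))
    (by
      have := h.blue (k - 1)
      rwa [Nat.sub_add_cancel hk.le, show v k = v 0 by simpa using h.periodic_fst 0,
        ← Nat.sub_add_cancel (show 1 ≤ k - 1 by omega)] at this)
  have := hmin _ _ _ hpath
  omega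

lemma hasAltSquare_of_chord_mem_blue (h : IsAltCycle R B k v u)
    (hmin : ∀ m v' u', IsAltCycle R B m v' u' → k ≤ m) (hk : 1 < k) {r : ℕ} (hr : (v r, u (r + 1)) ∈ B) : HasAltSquare R B :=
  ⟨v r, v (r + 1), u r, u (r + 1), h.fst_ne hmin (by omega) (by omega),
    h.snd_ne hmin (by omega) (by omega), h.red r, h.red (r + 1), hr, h.blue r⟩

end IsAltCycle

theorem hasAltSquare_or_exists_matching (hRB : Disjoint R B)
    (h : ∃ k v u, IsAltCycle R B k v u) :
    HasAltSquare R B ∨ ∃ p₁ p₂ p₃ : α × β, p₁ ∉ R ∪ B ∧ p₂ ∉ R ∪ B ∧ p₃ ∉ R ∪ B ∧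
      p₁.1 ≠ p₂.1 ∧ p₁.1 ≠ p₃.1 ∧ p₂.1 ≠ p₃.1 ∧
      p₁.2 ≠ p₂.2 ∧ p₁.2 ≠ p₃.2 ∧ p₂.2 ≠ p₃.2 := by
  classical
  obtain ⟨v, u, hc⟩ := Nat.find_spec h
  have hmin : ∀ m v' u', IsAltCycle R B m v' u' → Nat.find h ≤ m :=
    fun m v' u' h' => Nat.find_min' h ⟨v', u', h'⟩
  have hk := hc.one_lt hRB
  by_cases hsq : ∃ r, (v r, u (r + 1)) ∈ B
  · obtain ⟨r, hr⟩ := hsq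
    exact .inl (hc.hasAltSquare_of_chord_mem_blue hmin hk hr)
  push Not at hsq
  have hchord (r : ℕ) : (v r, u (r + 1)) ∉ R ∪ B := by
    rintro (hR | hB)
    exacts [(hc.shift r).chord_notMem_red hmin hk (by simpa [Nat.add_comm 1] using hR), hsq r hB]
  -- a cycle of length 2 is itself a square: its chord is its own blue edge
  have hk3 : 3 ≤ Nat.find h := by
    by_contra! hk2
    have h2 : Nat.find h = 2 := by omega
    have hv : v (1 + 1) = v 0 := by simpa [h2] using hc.periodic_fst 0
    exact hsq 0 (by simpa only [hv] using hc.blue 1)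
  right
  refine ⟨(v 0, u 1), (v 1, u 2), (v 2, u 3), hchord 0, hchord 1, hchord 2, ?_, ?_, ?_, ?_, ?_, ?_⟩
  all_goals first
    | exact hc.fst_ne hmin (by omega) (by omega)
    | exact hc.snd_ne hmin (by omega) (by omega)

lemma exists_isAltCycle_of_forall_exists {S : Set (α × β)} (hS : S.Finite) (hne : S.Nonempty)
    (hSR : S ⊆ R) (hstep : ∀ e ∈ S, ∃ e' ∈ S, (e'.1, e.2) ∈ B) :
    ∃ k v u, IsAltCycle R B k v u := by
  have := hS.to_subtype
  have := hne.to_subtype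
  choose f hfS hfB using fun e : S => hstep e e.2
  set g : S → S := fun e => ⟨f e, hfS e⟩
  obtain ⟨e, he⟩ := periodicPts_nonempty g
  have hper : ∀ i, g^[i + minimalPeriod g e] e = g^[i] e := fun i => by
    rw [iterate_add_apply, isPeriodicPt_minimalPeriod g e]
  refine ⟨_, fun i => (g^[i] e : α × β).1, fun i => (g^[i] e : α × β).2,
    minimalPeriod_pos_of_mem_periodicPts he, fun i => by simp only [hper],
    fun i => by simp only [hper], fun i => hSR (g^[i] e).2, fun i => ?_⟩
  rw [iterate_succ_apply']
  exact hfB _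

end AltCycle

section Realisation

variable {n n' : ℕ} {a : Fin n → ℕ} {b : Fin n' → ℕ} {FE FN G H D A : Finset (Fin n × Fin n')}

namespace IsRealisation

lemma exists_mem_sdiff_fst (hG : IsRealisation a b G) (hH : IsRealisation a b H)
    {p : Fin n × Fin n'} (hp : p ∈ G \ H) : ∃ y, (p.1, y) ∈ H \ G := by
  obtain ⟨q, hq⟩ := sdiff_nonempty_of_card_eq (a := p) (s := G.filter (·.1 = p.1))
    (t := H.filter (·.1 = p.1)) ((hG.1 _).trans (hH.1 _).symm) (by simp_all)
  simp only [mem_sdiff, mem_filter, not_and] at hq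
  obtain ⟨⟨hqH, hq1⟩, hqG⟩ := hq
  refine ⟨q.2, ?_⟩
  rw [show (p.1, q.2) = q from Prod.ext hq1.symm rfl, mem_sdiff]
  exact ⟨hqH, fun h => hqG h hq1⟩

lemma exists_mem_sdiff_snd (hG : IsRealisation a b G) (hH : IsRealisation a b H)
    {p : Fin n × Fin n'} (hp : p ∈ G \ H) : ∃ x, (x, p.2) ∈ H \ G := by
  obtain ⟨q, hq⟩ := sdiff_nonempty_of_card_eq (a := p) (s := G.filter (·.2 = p.2))
    (t := H.filter (·.2 = p.2)) ((hG.2 _).trans (hH.2 _).symm) (by simp_all)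
  simp only [mem_sdiff, mem_filter, not_and] at hq
  obtain ⟨⟨hqH, hq2⟩, hqG⟩ := hq
  refine ⟨q.1, ?_⟩
  rw [show (q.1, p.2) = q from Prod.ext rfl hq2.symm, mem_sdiff]
  exact ⟨hqH, fun h => hqG h hq2⟩

end IsRealisation

end Realisation

section Realisation

variable {n n' : ℕ} {a : Fin n → ℕ} {b : Fin n' → ℕ} {FE FN G D A : Finset (Fin n × Fin n')}

lemma IsRealisation.sdiff_union (hG : IsRealisation a b G) (hD : D ⊆ G) (hA : Disjoint A G)
    (hfst : ∀ i, #(D.filter (·.1 = i)) = #(A.filter (·.1 = i)))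
    (hsnd : ∀ j, #(D.filter (·.2 = j)) = #(A.filter (·.2 = j))) :
    IsRealisation a b (G \ D ∪ A) :=
  ⟨fun i => (card_filter_sdiff_union hD hA _ (hfst i)).trans (hG.1 i),
    fun j => (card_filter_sdiff_union hD hA _ (hsnd j)).trans (hG.2 j)⟩

namespace IsFFixedRealisation

lemma sdiff_union (hG : IsFFixedRealisation a b FE FN G) (hD : D ⊆ G) (hA : Disjoint A G)
    (hDFE : Disjoint D FE) (hAFN : Disjoint A FN)
    (hfst : ∀ i, #(D.filter (·.1 = i)) = #(A.filter (·.1 = i)))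
    (hsnd : ∀ j, #(D.filter (·.2 = j)) = #(A.filter (·.2 = j))) :
    IsFFixedRealisation a b FE FN (G \ D ∪ A) := by
  obtain ⟨hreal, hFE, hFN⟩ := hG
  refine ⟨hreal.sdiff_union hD hA hfst hsnd, fun p hp => ?_, ?_⟩
  · exact mem_union_left _ (mem_sdiff.mpr ⟨hFE hp, fun h => disjoint_left.mp hDFE h hp⟩)
  · rw [← disjoint_iff_inter_eq_empty] at hFN ⊢
    exact disjoint_union_right.mpr ⟨hFN.mono_right sdiff_subset, hAFN.symm⟩

lemma exists_card_symmDiff_eq_four (hG : IsFFixedRealisation a b FE FN G)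
    (hsq : HasAltSquare {p | p ∈ G ∧ p ∉ FE} {p | p ∉ G ∧ p ∉ FN}) :
    ∃ G', IsFFixedRealisation a b FE FN G' ∧ #(symmDiff G G') = 4 := by
  obtain ⟨x₀, x₁, y₀, y₁, hx, -, ⟨h₀₀, h₀₀'⟩, ⟨h₁₁, h₁₁'⟩, ⟨h₀₁, h₀₁'⟩, ⟨h₁₀, h₁₀'⟩⟩ := hsq
  set D : Finset (Fin n × Fin n') := {(x₀, y₀), (x₁, y₁)}
  set A : Finset (Fin n × Fin n') := {(x₀, y₁), (x₁, y₀)}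
  have hD : D ⊆ G := by simp [D, insert_subset_iff, h₀₀, h₁₁]
  have hA : Disjoint A G := by simp [A, h₀₁, h₁₀]
  have hDFE : Disjoint D FE := by simp [D, h₀₀', h₁₁']
  have hAFN : Disjoint A FN := by simp [A, h₀₁', h₁₀']
  refine ⟨G \ D ∪ A, hG.sdiff_union hD hA hDFE hAFN (fun i => ?_) (fun j => ?_), ?_⟩
  · rw [card_filter, card_filter, sum_pair (by simp [hx]), sum_pair (by simp [hx])]
  · rw [card_filter, card_filter, sum_pair (by simp [hx]), sum_pair (by simp [hx]), add_comm]
  · rw [symmDiff_sdiff_union hD hA, card_union_of_disjoint (hA.symm.mono_left hD),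
      card_pair (by simp [hx]), card_pair (by simp [hx])]

end IsFFixedRealisation

end Realisation

lemma IsFFixedRealisation.exists_isAltCycle {n n' : ℕ} {a : Fin n → ℕ} {b : Fin n' → ℕ}
    {FE FN G H : Finset (Fin n × Fin n')} (hG : IsFFixedRealisation a b FE FN G)
    (hH : IsFFixedRealisation a b FE FN H) (hne : G ≠ H) :
    ∃ k v u, IsAltCycle {p | p ∈ G ∧ p ∉ FE} {p | p ∉ G ∧ p ∉ FN} k v u := by
  refine exists_isAltCycle_of_forall_exists (S := ↑(G \ H)) (Set.toFinite _) ?_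
    (fun p hp => ⟨(mem_sdiff.mp hp).1, fun h => (mem_sdiff.mp hp).2 (hH.2.1 h)⟩)
    (fun e he => ?_)
  · rw [coe_nonempty]
    by_contra hGH
    rw [not_nonempty_iff_eq_empty, sdiff_eq_empty_iff_subset] at hGH
    obtain ⟨p, hp⟩ := sdiff_nonempty.mpr fun hHG => hne (hGH.antisymm hHG)
    obtain ⟨x, hx⟩ := hH.1.exists_mem_sdiff_snd hG.1 hp
    exact (mem_sdiff.mp hx).2 (hGH (mem_sdiff.mp hx).1)
  · obtain ⟨x, hx⟩ := hG.1.exists_mem_sdiff_snd hH.1 he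
    obtain ⟨y, hy⟩ := hH.1.exists_mem_sdiff_fst hG.1 hx
    have hHFN : Disjoint FN H := disjoint_iff_inter_eq_empty.mpr hH.2.2
    exact ⟨(x, y), hy, (mem_sdiff.mp hx).2, disjoint_right.mp hHFN (mem_sdiff.mp hx).1⟩

theorem stmt1_general {n n' : ℕ} (a : Fin n → ℕ) (b : Fin n' → ℕ)
    (FE FN : Finset (Fin n × Fin n'))
    (hF : ¬ HasMatchingThree (FE ∪ FN))
    (htwo : ∃ E₁ E₂ : Finset (Fin n × Fin n'),
      IsFFixedRealisation a b FE FN E₁ ∧ IsFFixedRealisation a b FE FN E₂ ∧ E₁ ≠ E₂)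
    (G : Finset (Fin n × Fin n')) (hG : IsFFixedRealisation a b FE FN G) :
    ∃ G' : Finset (Fin n × Fin n'),
      IsFFixedRealisation a b FE FN G' ∧ (symmDiff G G').card = 4 := by
  obtain ⟨E₁, E₂, h₁, h₂, h₁₂⟩ := htwo
  obtain ⟨H, hH, hne⟩ : ∃ H, IsFFixedRealisation a b FE FN H ∧ G ≠ H := by
    by_cases h : G = E₁
    · exact ⟨E₂, h₂, h ▸ h₁₂⟩
    · exact ⟨E₁, h₁, h⟩
  have hRB : Disjoint {p | p ∈ G ∧ p ∉ FE} {p | p ∉ G ∧ p ∉ FN} :=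
    Set.disjoint_left.mpr fun _ hp hp' => hp'.1 hp.1
  have hfixed (p : Fin n × Fin n')
      (hp : p ∉ {p | p ∈ G ∧ p ∉ FE} ∪ {p | p ∉ G ∧ p ∉ FN}) : p ∈ FE ∪ FN := by
    simp only [Set.mem_union, Set.mem_ofPred_eq] at hp
    simp only [mem_union]
    tauto
  rcases hasAltSquare_or_exists_matching hRB (hG.exists_isAltCycle hH hne) with
    hsq | ⟨p₁, p₂, p₃, hp₁, hp₂, hp₃, hdistinct⟩
  · exact hG.exists_card_symmDiff_eq_four hsq
  · exact absurd ⟨p₁, p₂, p₃, hfixed _ hp₁, hfixed _ hp₂, hfixed _ hp₃, hdistinct⟩ hF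

/-- if `F = FE ∪ FN` contains no matching of size 3 and there are at
least two distinct `F`-fixed realisations of `S`, then every `F`-fixed realisation
`G` admits a 4-swap: there is an `F`-fixed realisation `G'` with
`|E(G) △ E(G')| = 4`. -/
theorem stmt1 {n n' : ℕ} (a : Fin n → ℕ) (b : Fin n' → ℕ)
    (FE FN : Finset (Fin n × Fin n')) (hdisj : Disjoint FE FN)
    (hF : ¬ HasMatchingThree (FE ∪ FN))
    (htwo : ∃ E₁ E₂ : Finset (Fin n × Fin n'),
      IsFFixedRealisation a b FE FN E₁ ∧ IsFFixedRealisation a b FE FN E₂ ∧ E₁ ≠ E₂)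
    (G : Finset (Fin n × Fin n')) (hG : IsFFixedRealisation a b FE FN G) :
    ∃ G' : Finset (Fin n × Fin n'),
      IsFFixedRealisation a b FE FN G' ∧ (symmDiff G G').card = 4 :=
  stmt1_general a b FE FN hF htwo G hG
end

section
/- Let A_i, A_j, F_i, F_j be finite sets and define A_{i−j} := A_i \ (A_j ∪ F_i ∪ F_j) and A_{j−i} := A_j \ (A_i ∪ F_i ∪ F_j). Let B_{ij} ⊆ A_{i−j} ∪ A_{j−i} be any subset with |B_{ij}| = |A_{i−j}|, let B_{ji} := (A_{i−j} ∪ A_{j−i}) \ B_{ij}, and define B_i := (A_i \ A_{i−j}) ∪ B_{ij} and B_j := (A_j \ A_{j−i}) ∪ B_{ji}. Then: (i) |B_i| = |A_i| and |B_j| = |A_j|; (ii) B_i △ B_j = A_i △ A_j; and (iii) setting B_{i−j} := B_i \ (B_j ∪ F_i ∪ F_j) and B_{j−i} := B_j \ (B_i ∪ F_i ∪ F_j), one has |B_{i−j}| = |A_{i−j}| and |B_{j−i}| = |A_{j−i}|. -/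
/-!
Write `F = F_i ∪ F_j` and `T = A_{i−j} ∪ A_{j−i} = (A_i △ A_j) \ F`. The trade only redistributes
the elements of `T`, each of which lies in exactly one of the two lists before and after the
trade, so the symmetric difference is unchanged. Outside `T` the two new lists agree with the old
ones, so the tradeable part of `B_i` is exactly `B_{ij}` and that of `B_j` is exactly `B_{ji}`;
the cardinalities follow because `|B_{ij}| = |A_{i−j}|` and hence `|B_{ji}| = |A_{j−i}|`.
-/

open Finset

namespace Finset

variable {α : Type*} [DecidableEq α] {Ai Aj F Aij Aji S S' : Finset α}

theorem card_sdiff_union_of_card_eq {s t u : Finset α} (hts : t ⊆ s) (hdisj : Disjoint (s \ t) u)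
    (hcard : #u = #t) : #((s \ t) ∪ u) = #s := by
  rw [card_union_of_disjoint hdisj, hcard, card_sdiff_add_card_eq_card hts]

theorem disjoint_sdiff_union_sdiff_union {s t u : Finset α} :
    Disjoint (s \ (t ∪ u)) (t \ (s ∪ u)) :=
  disjoint_sdiff_sdiff.mono (sdiff_subset_sdiff subset_rfl subset_union_left)
    (sdiff_subset_sdiff subset_rfl subset_union_left)

theorem disjoint_sdiff_tradeable (hAij : Aij = Ai \ (Aj ∪ F)) (hAji : Aji = Aj \ (Ai ∪ F))
    (hS : S ⊆ Aij ∪ Aji) : Disjoint (Ai \ Aij) S := by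
  subst hAij hAji
  rw [disjoint_left]
  intro x hx hxS
  have := hS hxS
  simp only [mem_sdiff, mem_union] at hx this
  tauto

theorem trade_sdiff_eq (hAij : Aij = Ai \ (Aj ∪ F)) (hAji : Aji = Aj \ (Ai ∪ F))
    (hS : S ⊆ Aij ∪ Aji) (hS' : S' = (Aij ∪ Aji) \ S) :
    ((Ai \ Aij) ∪ S) \ ((Aj \ Aji) ∪ S' ∪ F) = S := by
  subst hAij hAji hS'
  ext x
  have := @hS x
  simp only [mem_sdiff, mem_union] at this ⊢
  tauto

theorem symmDiff_trade (hAij : Aij = Ai \ (Aj ∪ F)) (hAji : Aji = Aj \ (Ai ∪ F))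
    (hS : S ⊆ Aij ∪ Aji) :
    symmDiff ((Ai \ Aij) ∪ S) ((Aj \ Aji) ∪ ((Aij ∪ Aji) \ S)) = symmDiff Ai Aj := by
  subst hAij hAji
  ext x
  have := @hS x
  simp only [mem_symmDiff, mem_sdiff, mem_union] at this ⊢
  tauto

end Finset

/-- the set-theoretic core of an `F`-ignoring trade. With
`Aij = A_i \ (A_j ∪ F_i ∪ F_j)`, `Aji = A_j \ (A_i ∪ F_i ∪ F_j)`, a subset
`Bij ⊆ Aij ∪ Aji` of cardinality `|Aij|`, its complement `Bji`, and the traded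
lists `Bi = (A_i \ Aij) ∪ Bij`, `Bj = (A_j \ Aji) ∪ Bji`, we have:
(i) `|Bi| = |A_i|`, `|Bj| = |A_j|`; (ii) `Bi △ Bj = A_i △ A_j`;
(iii) `|Bi \ (Bj ∪ F_i ∪ F_j)| = |Aij|` and `|Bj \ (Bi ∪ F_i ∪ F_j)| = |Aji|`. -/
theorem stmt2 {α : Type*} [DecidableEq α]
    (Ai Aj Fi Fj Aij Aji Bij Bji Bi Bj : Finset α)
    (hAij : Aij = Ai \ (Aj ∪ Fi ∪ Fj))
    (hAji : Aji = Aj \ (Ai ∪ Fi ∪ Fj))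
    (hBijsub : Bij ⊆ Aij ∪ Aji)
    (hBijcard : Bij.card = Aij.card)
    (hBji : Bji = (Aij ∪ Aji) \ Bij)
    (hBi : Bi = (Ai \ Aij) ∪ Bij)
    (hBj : Bj = (Aj \ Aji) ∪ Bji) :
    Bi.card = Ai.card ∧ Bj.card = Aj.card ∧
    symmDiff Bi Bj = symmDiff Ai Aj ∧
    (Bi \ (Bj ∪ Fi ∪ Fj)).card = Aij.card ∧
    (Bj \ (Bi ∪ Fi ∪ Fj)).card = Aji.card := by
  rw [union_assoc] at hAij hAji
  have hdisj : Disjoint Aij Aji := hAij ▸ hAji ▸ disjoint_sdiff_union_sdiff_union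
  have hBjisub : Bji ⊆ Aji ∪ Aij := hBji ▸ union_comm Aij Aji ▸ sdiff_subset
  have hBij : Bij = (Aji ∪ Aij) \ Bji := by
    rw [hBji, union_comm Aji, Finset.sdiff_sdiff_eq_self hBijsub]
  have hBjicard : #Bji = #Aji := by
    rw [hBji, card_sdiff_of_subset hBijsub, card_union_of_disjoint hdisj, hBijcard,
      Nat.add_sub_cancel_left]
  subst hBi hBj
  refine ⟨?_, ?_, ?_, ?_, ?_⟩
  · exact card_sdiff_union_of_card_eq (hAij ▸ sdiff_subset)
      (disjoint_sdiff_tradeable hAij hAji hBijsub) hBijcard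
  · exact card_sdiff_union_of_card_eq (hAji ▸ sdiff_subset)
      (disjoint_sdiff_tradeable hAji hAij hBjisub) hBjicard
  · exact hBji ▸ symmDiff_trade hAij hAji hBijsub
  · rw [union_assoc _ Fi, trade_sdiff_eq hAij hAji hBijsub hBji, hBijcard]
  · rw [union_assoc _ Fi, trade_sdiff_eq hAji hAij hBjisub hBij, hBjicard]
end

section
/- Let n ≥ 4 and let C be the cycle on vertices v_0, …, v_{2n−1} (indices taken modulo 2n). Let A be the set of all chords {v_i, v_j} such that the distance of i and j along C is odd and at least 3 (equivalently, (i − j) mod 2n is odd and different from 1 and 2n − 1). Then for every ℓ with 4 ≤ ℓ ≤ n, the graph with edge set A contains a cycle of length 2ℓ, i.e. there are pairwise distinct indices i_1, …, i_{2ℓ} in {0,…,2n−1} with {v_{i_s}, v_{i_{s+1}}} ∈ A for all s (indices of the sequence taken cyclically). -/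
/-!
Visit the even vertices `0, 2, …, 2ℓ - 2` in order and insert after each even vertex `s` the
odd vertex `s + 5 - 2ℓ` (mod `2n`). The cycle then alternately steps by `5 - 2ℓ` and `2ℓ - 3`,
and closes with the step from `2ℓ - 1 + 4 - 2ℓ = 3` back to `0`. All three steps are odd and
at least `3` away from `0` in either direction because `4 ≤ ℓ ≤ n`, and the vertices are
distinct since parity separates the even ones from the odd ones.
-/

namespace ZMod

theorem val_sub_eq_mod {N : ℕ} [NeZero N] (x y : ZMod N) :
    (x - y).val = (x.val + N - y.val) % N := by
  rw [← val_natCast, Nat.cast_sub (by linarith [y.val_lt]), Nat.cast_add, natCast_self,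
    natCast_zmod_val, natCast_zmod_val, add_zero]

def IsOddChord {N : ℕ} (x : ZMod N) : Prop :=
  Odd x.val ∧ x.val ≠ 1 ∧ x.val ≠ N - 1

theorem isOddChord_natCast {N c : ℕ} (hc : Odd c) (h3 : 3 ≤ c) (hcN : c + 3 ≤ N) :
    IsOddChord (c : ZMod N) := by
  rw [IsOddChord, val_natCast, Nat.mod_eq_of_lt (by omega)]
  exact ⟨hc, by omega, by omega⟩

theorem IsOddChord.neg {N : ℕ} [NeZero N] (hN : Even N) {x : ZMod N} (hx : IsOddChord x) :
    IsOddChord (-x) := by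
  obtain ⟨hodd, h1, hN1⟩ := hx
  have hx0 : x ≠ 0 := by rintro rfl; simp at hodd
  have hlt := x.val_lt
  rw [IsOddChord, neg_val, if_neg hx0]
  exact ⟨Nat.Even.sub_odd hlt.le hN hodd, by omega, by omega⟩

theorem exists_cycle_of_isOddChord {N m : ℕ} [NeZero N] (F : ℕ → ZMod N)
    (hF : Set.InjOn F (Set.Iio m)) (hstep : ∀ s < m, IsOddChord (F ((s + 1) % m) - F s)) :
    ∃ e : ℕ → ℕ,
      (∀ s < m, e s < N) ∧
      (∀ s < m, ∀ t < m, e s = e t → s = t) ∧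
      (∀ s < m,
        Odd ((e ((s + 1) % m) + N - e s) % N) ∧
        (e ((s + 1) % m) + N - e s) % N ≠ 1 ∧
        (e ((s + 1) % m) + N - e s) % N ≠ N - 1) := by
  refine ⟨fun s => (F s).val, fun s _ => (F s).val_lt,
    fun s hs t ht h => hF hs ht (val_injective N h), fun s hs => ?_⟩
  simpa only [IsOddChord, val_sub_eq_mod] using hstep s hs

def shiftOdds {N : ℕ} (a : ZMod N) (s : ℕ) : ZMod N :=
  s + if Even s then 0 else 2 * a

theorem shiftOdds_of_even {N : ℕ} (a : ZMod N) {s : ℕ} (hs : Even s) :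
    shiftOdds a s = s := by
  simp [shiftOdds, hs]

theorem shiftOdds_of_odd {N : ℕ} (a : ZMod N) {s : ℕ} (hs : Odd s) :
    shiftOdds a s = s + 2 * a := by
  simp [shiftOdds, Nat.not_even_iff_odd.mpr hs]

theorem shiftOdds_injOn {N : ℕ} (hN : Even N) (a : ZMod N) :
    Set.InjOn (shiftOdds a) (Set.Iio N) := by
  intro s hs t ht hst
  have hpar : ∀ u : ℕ, castHom (even_iff_two_dvd.mp hN) (ZMod 2) (shiftOdds a u) = u := by
    intro u
    have h2 : (2 : ZMod 2) = 0 := rfl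
    unfold shiftOdds
    split_ifs <;> simp only [map_add, map_natCast, map_mul, map_ofNat, h2, zero_mul, add_zero]
  have hst2 : s % 2 = t % 2 := by
    rw [← natCast_eq_natCast_iff', ← hpar, ← hpar, hst]
  have hEven : Even s ↔ Even t := by simp only [Nat.even_iff, hst2]
  simp only [shiftOdds, hEven, add_left_inj] at hst
  rwa [natCast_eq_natCast_iff', Nat.mod_eq_of_lt hs, Nat.mod_eq_of_lt ht] at hst

theorem isOddChord_shiftOdds_step {n ℓ : ℕ} [NeZero (2 * n)] (hℓ : 4 ≤ ℓ) (hℓn : ℓ ≤ n)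
    {s : ℕ} (hs : s < 2 * ℓ) :
    IsOddChord (shiftOdds (2 - ℓ : ZMod (2 * n)) ((s + 1) % (2 * ℓ)) -
      shiftOdds (2 - ℓ : ZMod (2 * n)) s) := by
  have chord {c : ℕ} (hc : Odd c) (h3 : 3 ≤ c) (hcN : c + 3 ≤ 2 * n) :
      IsOddChord (c : ZMod (2 * n)) ∧ IsOddChord (-(c : ZMod (2 * n))) :=
    ⟨isOddChord_natCast hc h3 hcN, (isOddChord_natCast hc h3 hcN).neg (even_two_mul n)⟩
  set a : ZMod (2 * n) := 2 - ℓ with ha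
  rcases Nat.lt_or_ge (s + 1) (2 * ℓ) with hs1 | hs1
  · rw [Nat.mod_eq_of_lt hs1]
    rcases Nat.even_or_odd s with hs2 | hs2
    · have hstep : shiftOdds a (s + 1) - shiftOdds a s = -((2 * ℓ - 5 : ℕ) : ZMod (2 * n)) := by
        rw [shiftOdds_of_odd _ hs2.add_one, shiftOdds_of_even _ hs2, Nat.cast_sub (by omega), ha]
        push_cast
        ring
      rw [hstep]
      exact (chord ⟨ℓ - 3, by omega⟩ (by omega) (by omega)).2
    · have hstep : shiftOdds a (s + 1) - shiftOdds a s = ((2 * ℓ - 3 : ℕ) : ZMod (2 * n)) := by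
        rw [shiftOdds_of_even _ hs2.add_one, shiftOdds_of_odd _ hs2, Nat.cast_sub (by omega), ha]
        push_cast
        ring
      rw [hstep]
      exact (chord ⟨ℓ - 2, by omega⟩ (by omega) (by omega)).1
  · obtain rfl : s = 2 * ℓ - 1 := by omega
    have hclose : shiftOdds a 0 - shiftOdds a (2 * ℓ - 1) = -((3 : ℕ) : ZMod (2 * n)) := by
      rw [shiftOdds_of_even _ Even.zero, shiftOdds_of_odd _ ⟨ℓ - 1, by omega⟩,
        Nat.cast_sub (by omega), ha]
      push_cast
      ring
    rw [Nat.sub_add_cancel (by omega), Nat.mod_self, hclose]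
    exact (chord (by decide) le_rfl (by omega)).2

end ZMod

open ZMod

theorem stmt4_general (n : ℕ) (ℓ : ℕ) (hℓ : 4 ≤ ℓ) (hℓn : ℓ ≤ n) :
    ∃ e : ℕ → ℕ,
      (∀ s < 2 * ℓ, e s < 2 * n) ∧
      (∀ s < 2 * ℓ, ∀ t < 2 * ℓ, e s = e t → s = t) ∧
      (∀ s < 2 * ℓ,
        Odd ((e ((s + 1) % (2 * ℓ)) + 2 * n - e s) % (2 * n)) ∧
        (e ((s + 1) % (2 * ℓ)) + 2 * n - e s) % (2 * n) ≠ 1 ∧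
        (e ((s + 1) % (2 * ℓ)) + 2 * n - e s) % (2 * n) ≠ 2 * n - 1) := by
  have : NeZero (2 * n) := ⟨by omega⟩
  have hinj : Set.InjOn (shiftOdds (2 - ℓ : ZMod (2 * n))) (Set.Iio (2 * ℓ)) :=
    (shiftOdds_injOn (even_two_mul n) _).mono (Set.Iio_subset_Iio (by omega))
  exact exists_cycle_of_isOddChord _ hinj fun s hs => isOddChord_shiftOdds_step hℓ hℓn hs

/-- let `n ≥ 4` and let `C` be the cycle on vertices `v_0, …, v_{2n-1}`
(indices mod `2n`). Let `A` be the set of chords `{v_i, v_j}` whose distance along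
`C` is odd and at least 3, i.e. `(i - j) mod 2n` is odd and different from `1` and
`2n - 1`. Then for every `ℓ` with `4 ≤ ℓ ≤ n` the chord graph `A` contains a cycle
of length `2ℓ`: there are pairwise distinct indices `e 0, …, e (2ℓ-1)` in
`{0, …, 2n-1}` such that every cyclically consecutive pair forms a chord of `A`.
(For `s, t < 2n`, `(s + 2n - t) % (2n)` is the value of `(s - t) mod 2n`.) -/
theorem stmt4 (n : ℕ) (hn : 4 ≤ n) (ℓ : ℕ) (hℓ : 4 ≤ ℓ) (hℓn : ℓ ≤ n) :
    ∃ e : ℕ → ℕ,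
      (∀ s < 2 * ℓ, e s < 2 * n) ∧
      (∀ s < 2 * ℓ, ∀ t < 2 * ℓ, e s = e t → s = t) ∧
      (∀ s < 2 * ℓ,
        Odd ((e ((s + 1) % (2 * ℓ)) + 2 * n - e s) % (2 * n)) ∧
        (e ((s + 1) % (2 * ℓ)) + 2 * n - e s) % (2 * n) ≠ 1 ∧
        (e ((s + 1) % (2 * ℓ)) + 2 * n - e s) % (2 * n) ≠ 2 * n - 1) :=
  stmt4_general n ℓ hℓ hℓn
end

section
/- Let G and G' be two realisations of the same bipartite degree sequence S with |E(G) △ E(G')| = 4. Then there exist distinct v, v' ∈ V and distinct u, u' ∈ U such that E(G) \ E(G') = {(v,u), (v',u')} and E(G') \ E(G) = {(v,u'), (v',u)}; that is, the symmetric difference forms a vertex-disjoint alternating 4-cycle. -/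
open Finset

namespace Finset

variable {α β : Type*}

lemma card_filter_sdiff_eq_of_card_filter_eq [DecidableEq α] {s t : Finset α} (P : α → Prop)
    [DecidablePred P] (h : #(s.filter P) = #(t.filter P)) :
    #((s \ t).filter P) = #((t \ s).filter P) := by
  have filter_sdiff : ∀ u v : Finset α, (u \ v).filter P = u.filter P \ v.filter P := by
    intro u v
    ext
    simp only [mem_filter, mem_sdiff]
    tauto
  rw [filter_sdiff, filter_sdiff, card_sdiff_eq_card_sdiff_iff, h]

lemma image_eq_of_card_fiber_eq [DecidableEq β] {s t : Finset α} (f : α → β)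
    (h : ∀ b, #(s.filter (f · = b)) = #(t.filter (f · = b))) : s.image f = t.image f := by
  ext b
  simp only [mem_image, ← filter_nonempty_iff, ← card_pos, h b]

end Finset

section Product

variable {α β : Type*} [DecidableEq α] [DecidableEq β]

lemma mk_fst_snd_mem_of_image_eq {D D' : Finset (α × β)} {p q : α × β} (hdisj : Disjoint D D')
    (hD : D = {p, q}) (hfst : D.image Prod.fst = D'.image Prod.fst)
    (hsnd : D.image Prod.snd = D'.image Prod.snd) : (p.1, q.2) ∈ D' := by
  have hp : p ∈ D := hD ▸ mem_insert_self p {q}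
  obtain ⟨x, hx, hx₁⟩ : ∃ x ∈ D', x.1 = p.1 := mem_image.1 (hfst ▸ mem_image_of_mem _ hp)
  have hx₂ : x.2 = p.2 ∨ x.2 = q.2 := by
    simpa [← hsnd, hD] using mem_image_of_mem Prod.snd hx
  rcases hx₂ with hx₂ | hx₂
  · exact absurd (Prod.ext hx₁ hx₂ ▸ hx) (disjoint_left.1 hdisj hp)
  · rwa [← hx₁, ← hx₂]

lemma eq_pair_of_image_eq {D D' : Finset (α × β)} {p q : α × β} (hdisj : Disjoint D D')
    (hD : D = {p, q}) (hD' : #D' ≤ 2) (hfst : D.image Prod.fst = D'.image Prod.fst)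
    (hsnd : D.image Prod.snd = D'.image Prod.snd) :
    p.1 ≠ q.1 ∧ p.2 ≠ q.2 ∧ D' = {(p.1, q.2), (q.1, p.2)} := by
  have h₁ := mk_fst_snd_mem_of_image_eq hdisj hD hfst hsnd
  have h₂ := mk_fst_snd_mem_of_image_eq hdisj (hD.trans (pair_comm p q)) hfst hsnd
  have hp : p ∉ D' := disjoint_left.1 hdisj (hD ▸ mem_insert_self p {q})
  have hv : p.1 ≠ q.1 := fun h => hp (by rwa [← h] at h₂)
  have hu : p.2 ≠ q.2 := fun h => hp (by rwa [← h] at h₁)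
  refine ⟨hv, hu, (eq_of_subset_of_card_le ?_ ?_).symm⟩
  · exact insert_subset h₁ (singleton_subset_iff.2 h₂)
  · rwa [card_pair (a := (p.1, q.2)) (b := (q.1, p.2)) fun h => hv (Prod.mk.inj h).1]

end Product

namespace IsRealisation

variable {n n' : ℕ} {a : Fin n → ℕ} {b : Fin n' → ℕ} {E F : Finset (Fin n × Fin n')}

lemma card_eq_sum (hE : IsRealisation a b E) : #E = ∑ i, a i := by
  rw [card_eq_sum_card_fiberwise (f := Prod.fst) (t := univ) fun _ _ => mem_univ _]
  exact sum_congr rfl fun i _ => hE.1 i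

lemma image_fst_sdiff_eq (hE : IsRealisation a b E) (hF : IsRealisation a b F) :
    (E \ F).image Prod.fst = (F \ E).image Prod.fst :=
  image_eq_of_card_fiber_eq _ fun i =>
    card_filter_sdiff_eq_of_card_filter_eq _ ((hE.1 i).trans (hF.1 i).symm)

lemma image_snd_sdiff_eq (hE : IsRealisation a b E) (hF : IsRealisation a b F) :
    (E \ F).image Prod.snd = (F \ E).image Prod.snd :=
  image_eq_of_card_fiber_eq _ fun j =>
    card_filter_sdiff_eq_of_card_filter_eq _ ((hE.2 j).trans (hF.2 j).symm)

end IsRealisation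

/-- if `G` and `G'` are realisations of the same bipartite degree
sequence with `|E(G) △ E(G')| = 4`, then the symmetric difference is a
vertex-disjoint alternating 4-cycle: there are distinct `v, v'` and distinct
`u, u'` with `G \ G' = {(v,u), (v',u')}` and `G' \ G = {(v,u'), (v',u)}`. -/
theorem stmt14 {n n' : ℕ} (a : Fin n → ℕ) (b : Fin n' → ℕ)
    (G G' : Finset (Fin n × Fin n'))
    (hG : IsRealisation a b G) (hG' : IsRealisation a b G')
    (hcard : (symmDiff G G').card = 4) :
    ∃ (v v' : Fin n) (u u' : Fin n'), v ≠ v' ∧ u ≠ u' ∧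
      G \ G' = {(v, u), (v', u')} ∧ G' \ G = {(v, u'), (v', u)} := by
  have hsdiff : #(G \ G') = #(G' \ G) :=
    card_sdiff_eq_card_sdiff_iff.2 (hG.card_eq_sum.trans hG'.card_eq_sum.symm)
  have hsymm : #(symmDiff G G') = #(G \ G') + #(G' \ G) :=
    card_union_of_disjoint disjoint_sdiff_sdiff
  obtain ⟨p, q, -, hD⟩ := card_eq_two.1 (show #(G \ G') = 2 by omega)
  obtain ⟨hv, hu, hD'⟩ := eq_pair_of_image_eq disjoint_sdiff_sdiff hD (by omega)
    (hG.image_fst_sdiff_eq hG') (hG.image_snd_sdiff_eq hG')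
  exact ⟨p.1, q.1, p.2, q.2, hv, hu, hD, hD'⟩
end

section
/- Let G and G' be two realisations of the same bipartite degree sequence S with |E(G) △ E(G')| = 6. Then there exist pairwise distinct v_1, v_2, v_3 ∈ V and pairwise distinct u_1, u_2, u_3 ∈ U such that E(G) \ E(G') = {(v_1,u_1), (v_2,u_2), (v_3,u_3)} and E(G') \ E(G) = {(v_2,u_1), (v_3,u_2), (v_1,u_3)}; that is, the symmetric difference forms a vertex-disjoint alternating 6-cycle. -/
open Finset Function

section FiberCards

variable {ι α β : Type*} [DecidableEq α] [DecidableEq β]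

def SameFiberCards (f : ι → α) (D D' : Finset ι) : Prop :=
  ∀ x, #{e ∈ D | f e = x} = #{e ∈ D' | f e = x}

variable {f : ι → α} {D D' : Finset ι}

theorem SameFiberCards.symm (h : SameFiberCards f D D') : SameFiberCards f D' D :=
  fun x ↦ (h x).symm

theorem SameFiberCards.sdiff [DecidableEq ι] (h : SameFiberCards f D D') :
    SameFiberCards f (D \ D') (D' \ D) := by
  intro x
  have hfilter : ∀ s t : Finset ι, {e ∈ s \ t | f e = x} = {e ∈ s | f e = x} \ {e ∈ t | f e = x} :=
    fun s t ↦ by ext; simp only [mem_filter, mem_sdiff]; tauto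
  rw [hfilter, hfilter]
  exact card_sdiff_comm (h x)

theorem SameFiberCards.card_eq (h : SameFiberCards f D D') : #D = #D' := by
  classical
  rw [card_eq_sum_card_fiberwise (t := (D ∪ D').image f)
      fun e he ↦ mem_image_of_mem f (mem_union_left _ he),
    card_eq_sum_card_fiberwise (t := (D ∪ D').image f)
      fun e he ↦ mem_image_of_mem f (mem_union_right _ he)]
  exact sum_congr rfl fun x _ ↦ h x

theorem SameFiberCards.exists_mem_fiber (h : SameFiberCards f D D') {e : ι} (he : e ∈ D) :
    ∃ e' ∈ D', f e' = f e := by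
  have : {e' ∈ D' | f e' = f e}.Nonempty := by
    rw [← card_pos, ← h]
    exact card_pos.2 ⟨e, mem_filter.2 ⟨he, rfl⟩⟩
  simpa only [Finset.Nonempty, mem_filter] using this

theorem injOn_of_sameFiberCards {r : ι → α} {c : ι → β} (hrc : Injective fun e ↦ (r e, c e))
    (hDD' : Disjoint D D') (hr : SameFiberCards r D D') (hc : SameFiberCards c D D')
    (hD' : #D' ≤ 3) : Set.InjOn r D := by
  intro e₁ he₁ e₂ he₂ hr₁₂
  by_contra hne
  have hc₁₂ : c e₁ ≠ c e₂ := fun h ↦ hne (hrc (Prod.ext hr₁₂ h))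
  have off_row : ∀ e ∈ D, ∀ e' ∈ D', c e' = c e → r e' ≠ r e := fun e he e' he' hce hre ↦
    disjoint_left.1 hDD' he (hrc (Prod.ext hre hce) ▸ he')
  obtain ⟨f₁, hf₁, hcf₁⟩ := hc.exists_mem_fiber he₁
  obtain ⟨f₂, hf₂, hcf₂⟩ := hc.exists_mem_fiber he₂
  have h_on_row : 2 ≤ #{e ∈ D' | r e = r e₁} := by
    rw [← hr]
    exact one_lt_card.2 ⟨e₁, mem_filter.2 ⟨he₁, rfl⟩, e₂, mem_filter.2 ⟨he₂, hr₁₂.symm⟩, hne⟩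
  have h_off_row : 2 ≤ #{e ∈ D' | ¬r e = r e₁} :=
    one_lt_card.2 ⟨f₁, mem_filter.2 ⟨hf₁, off_row e₁ he₁ f₁ hf₁ hcf₁⟩,
      f₂, mem_filter.2 ⟨hf₂, hr₁₂ ▸ off_row e₂ he₂ f₂ hf₂ hcf₂⟩,
      fun h ↦ hc₁₂ (by rw [← hcf₁, h, hcf₂])⟩
  have := card_filter_add_card_filter_not (s := D') fun e ↦ r e = r e₁
  omega

end FiberCards

theorem cyclic_of_derangement_three {β : Type*} {u₁ u₂ u₃ c₁ c₂ c₃ : β}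
    (h₁ : c₁ = u₁ ∨ c₁ = u₂ ∨ c₁ = u₃) (h₂ : c₂ = u₁ ∨ c₂ = u₂ ∨ c₂ = u₃)
    (h₃ : c₃ = u₁ ∨ c₃ = u₂ ∨ c₃ = u₃) (hc₁ : c₁ ≠ u₁) (hc₂ : c₂ ≠ u₂) (hc₃ : c₃ ≠ u₃)
    (h₁₂ : c₁ ≠ c₂) (h₁₃ : c₁ ≠ c₃) (h₂₃ : c₂ ≠ c₃) :
    (c₁ = u₂ ∧ c₂ = u₃ ∧ c₃ = u₁) ∨ (c₁ = u₃ ∧ c₂ = u₁ ∧ c₃ = u₂) := by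
  rcases h₁ with rfl | rfl | rfl <;> rcases h₂ with rfl | rfl | rfl <;>
    rcases h₃ with rfl | rfl | rfl <;> simp_all

theorem exists_alternating_hexagon_of_sameFiberCards {α β : Type*} [DecidableEq α]
    [DecidableEq β] {D D' : Finset (α × β)} (hDD' : Disjoint D D')
    (hr : SameFiberCards Prod.fst D D') (hc : SameFiberCards Prod.snd D D')
    (hD : #D = 3) (hD' : #D' = 3) :
    ∃ (v₁ v₂ v₃ : α) (u₁ u₂ u₃ : β),
      v₁ ≠ v₂ ∧ v₁ ≠ v₃ ∧ v₂ ≠ v₃ ∧ u₁ ≠ u₂ ∧ u₁ ≠ u₃ ∧ u₂ ≠ u₃ ∧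
      D = {(v₁, u₁), (v₂, u₂), (v₃, u₃)} ∧ D' = {(v₂, u₁), (v₃, u₂), (v₁, u₃)} := by
  have hrD : Set.InjOn (Prod.fst : α × β → α) D :=
    injOn_of_sameFiberCards (c := Prod.snd) injective_id hDD' hr hc hD'.le
  have hcD : Set.InjOn (Prod.snd : α × β → β) D :=
    injOn_of_sameFiberCards (c := Prod.fst) Prod.swap_injective hDD' hc hr hD'.le
  have hcD' : Set.InjOn (Prod.snd : α × β → β) D' :=
    injOn_of_sameFiberCards (c := Prod.fst) Prod.swap_injective hDD'.symm hc.symm hr.symm hD.le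
  obtain ⟨⟨v₁, u₁⟩, ⟨v₂, u₂⟩, ⟨v₃, u₃⟩, h₁₂, h₁₃, h₂₃, rfl⟩ := card_eq_three.1 hD
  have hv₁₂ : v₁ ≠ v₂ := hrD.ne (by simp) (by simp) h₁₂
  have hv₁₃ : v₁ ≠ v₃ := hrD.ne (by simp) (by simp) h₁₃
  have hv₂₃ : v₂ ≠ v₃ := hrD.ne (by simp) (by simp) h₂₃
  have hu₁₂ : u₁ ≠ u₂ := hcD.ne (by simp) (by simp) h₁₂
  have hu₁₃ : u₁ ≠ u₃ := hcD.ne (by simp) (by simp) h₁₃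
  have hu₂₃ : u₂ ≠ u₃ := hcD.ne (by simp) (by simp) h₂₃
  have mate : ∀ v u, (v, u) ∈ ({(v₁, u₁), (v₂, u₂), (v₃, u₃)} : Finset (α × β)) →
      ∃ c, (v, c) ∈ D' ∧ (c = u₁ ∨ c = u₂ ∨ c = u₃) ∧ c ≠ u := by
    intro v u hvu
    obtain ⟨⟨v', c⟩, hvc, rfl : v' = v⟩ := hr.exists_mem_fiber hvu
    refine ⟨c, hvc, ?_, fun hcu ↦ disjoint_left.1 hDD' hvu (hcu ▸ hvc)⟩
    obtain ⟨q, hq, rfl : q.2 = c⟩ := hc.symm.exists_mem_fiber hvc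
    simp only [mem_insert, mem_singleton] at hq
    rcases hq with rfl | rfl | rfl <;> simp
  obtain ⟨c₁, hc₁D', hc₁, hc₁u⟩ := mate v₁ u₁ (by simp)
  obtain ⟨c₂, hc₂D', hc₂, hc₂u⟩ := mate v₂ u₂ (by simp)
  obtain ⟨c₃, hc₃D', hc₃, hc₃u⟩ := mate v₃ u₃ (by simp)
  have hD'eq : D' = {(v₁, c₁), (v₂, c₂), (v₃, c₃)} := by
    refine (eq_of_subset_of_card_le ?_ ?_).symm
    · simp [insert_subset_iff, hc₁D', hc₂D', hc₃D']
    · rw [hD', card_eq_three.2 ⟨_, _, _, by simp [hv₁₂], by simp [hv₁₃], by simp [hv₂₃], rfl⟩]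
  have hc₁₂ : c₁ ≠ c₂ := hcD'.ne hc₁D' hc₂D' (by simp [hv₁₂])
  have hc₁₃ : c₁ ≠ c₃ := hcD'.ne hc₁D' hc₃D' (by simp [hv₁₃])
  have hc₂₃ : c₂ ≠ c₃ := hcD'.ne hc₂D' hc₃D' (by simp [hv₂₃])
  rcases cyclic_of_derangement_three hc₁ hc₂ hc₃ hc₁u hc₂u hc₃u hc₁₂ hc₁₃ hc₂₃ with
    ⟨h₁, h₂, h₃⟩ | ⟨h₁, h₂, h₃⟩ <;> rw [h₁, h₂, h₃] at hD'eq <;> subst hD'eq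
  · exact ⟨v₁, v₃, v₂, u₁, u₃, u₂, hv₁₃, hv₁₂, hv₂₃.symm, hu₁₃, hu₁₂, hu₂₃.symm, by grind, by grind⟩
  · exact ⟨v₁, v₂, v₃, u₁, u₂, u₃, hv₁₂, hv₁₃, hv₂₃, hu₁₂, hu₁₃, hu₂₃, rfl, by grind⟩

/-- if `G` and `G'` are realisations of the same bipartite degree
sequence with `|E(G) △ E(G')| = 6`, then the symmetric difference is a
vertex-disjoint alternating 6-cycle: there are pairwise distinct `v₁, v₂, v₃` and
pairwise distinct `u₁, u₂, u₃` with `G \ G' = {(v₁,u₁), (v₂,u₂), (v₃,u₃)}` and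
`G' \ G = {(v₂,u₁), (v₃,u₂), (v₁,u₃)}`. -/
theorem stmt15 {n n' : ℕ} (a : Fin n → ℕ) (b : Fin n' → ℕ)
    (G G' : Finset (Fin n × Fin n'))
    (hG : IsRealisation a b G) (hG' : IsRealisation a b G')
    (hcard : (symmDiff G G').card = 6) :
    ∃ (v₁ v₂ v₃ : Fin n) (u₁ u₂ u₃ : Fin n'),
      v₁ ≠ v₂ ∧ v₁ ≠ v₃ ∧ v₂ ≠ v₃ ∧ u₁ ≠ u₂ ∧ u₁ ≠ u₃ ∧ u₂ ≠ u₃ ∧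
      G \ G' = {(v₁, u₁), (v₂, u₂), (v₃, u₃)} ∧
      G' \ G = {(v₂, u₁), (v₃, u₂), (v₁, u₃)} := by
  have hr : SameFiberCards Prod.fst (G \ G') (G' \ G) :=
    SameFiberCards.sdiff fun i ↦ (hG.1 i).trans (hG'.1 i).symm
  have hc : SameFiberCards Prod.snd (G \ G') (G' \ G) :=
    SameFiberCards.sdiff fun j ↦ (hG.2 j).trans (hG'.2 j).symm
  have hdisj : Disjoint (G \ G') (G' \ G) := disjoint_sdiff_sdiff
  rw [Finset.symmDiff_def, card_union_of_disjoint hdisj] at hcard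
  have hDD' := hr.card_eq
  exact exists_alternating_hexagon_of_sameFiberCards hdisj hr hc (by omega) (by omega)
end
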